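/- arXiv:2503.07438 — 2 statements merged into one kernel-verified Lean document; each statement's English description precedes it below -/
import Mathlib

section
/- Solution membership in a QMI set: given matrices Y ∈ ℝ^{n×T}, Φ ∈ ℝ^{k×T}, Π ∈ ℝ^{(n+T)×(n+T)} symmetric, and θ ∈ ℝ^{k×n}, define W := Y - θᵀΦ and N := [[I_n, Y],[0, -Φ]] Π [[I_n, Y],[0, -Φ]]ᵀ. Then Wᵀ ∈ 𝒵(Π) (i.e., [I_n; Wᵀ]ᵀ Π [I_n; Wᵀ] ⪰ 0) if and only if θ ∈ 𝒵(N) (i.e., [I_n; θ]ᵀ N [I_n; θ] ⪰ 0). -/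
open Matrix

/-- The identity `[I, W] = [I, θᵀ] [[I, Y], [0, -Φ]]` with `W = Y - θᵀΦ`, transposed.
Without the ascription the product elaborates with the `CStarMatrix` multiplication instance. -/
lemma fromBlocks_transpose_mul_fromRows_one {R n t k : Type*} [CommRing R] [Fintype n]
    [Fintype k] [DecidableEq n] (Y : Matrix n t R) (Φ : Matrix k t R) (θ : Matrix k n R) :
    (fromBlocks (1 : Matrix n n R) Y 0 (-Φ))ᵀ * (fromRows 1 θ : Matrix (n ⊕ k) n R) =
      fromRows 1 (Y - θᵀ * Φ)ᵀ := by
  rw [fromBlocks_transpose, fromBlocks_mul_fromRows]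
  simp [sub_eq_add_neg]

lemma transpose_mul_mul_mul_transpose_mul_eq {R m l p : Type*} [CommSemiring R] [Fintype m]
    [Fintype l] (A : Matrix l m R) (P : Matrix m m R) (x : Matrix l p R) :
    xᵀ * (A * P * Aᵀ) * x = (Aᵀ * x)ᵀ * P * (Aᵀ * x) := by
  simp only [Matrix.transpose_mul, transpose_transpose, Matrix.mul_assoc]

theorem stmt_7_general (n T k : ℕ)
    (Y : Matrix (Fin n) (Fin T) ℝ) (Φ : Matrix (Fin k) (Fin T) ℝ)
    (Pm : Matrix (Fin n ⊕ Fin T) (Fin n ⊕ Fin T) ℝ)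
    (θ : Matrix (Fin k) (Fin n) ℝ) :
    (((Matrix.fromRows (1 : Matrix (Fin n) (Fin n) ℝ) (Y - θᵀ * Φ)ᵀ)ᵀ * Pm *
        Matrix.fromRows (1 : Matrix (Fin n) (Fin n) ℝ) (Y - θᵀ * Φ)ᵀ).PosSemidef) ↔
    (((Matrix.fromRows (1 : Matrix (Fin n) (Fin n) ℝ) θ)ᵀ *
        (Matrix.fromBlocks (1 : Matrix (Fin n) (Fin n) ℝ) Y 0 (-Φ) * Pm *
          (Matrix.fromBlocks (1 : Matrix (Fin n) (Fin n) ℝ) Y 0 (-Φ))ᵀ) *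
        Matrix.fromRows (1 : Matrix (Fin n) (Fin n) ℝ) θ).PosSemidef) := by
  rw [transpose_mul_mul_mul_transpose_mul_eq, fromBlocks_transpose_mul_fromRows_one]

/-- Solution membership in a QMI set: with `W := Y - θᵀΦ` and
`N := [[I, Y],[0, -Φ]] Pm [[I, Y],[0, -Φ]]ᵀ`, we have `Wᵀ ∈ 𝒵(Pm)` iff `θ ∈ 𝒵(N)`. -/
theorem stmt_7 (n T k : ℕ)
    (Y : Matrix (Fin n) (Fin T) ℝ) (Φ : Matrix (Fin k) (Fin T) ℝ)
    (Pm : Matrix (Fin n ⊕ Fin T) (Fin n ⊕ Fin T) ℝ) (hPm : Pm.IsHermitian)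
    (θ : Matrix (Fin k) (Fin n) ℝ) :
    (((Matrix.fromRows (1 : Matrix (Fin n) (Fin n) ℝ) (Y - θᵀ * Φ)ᵀ)ᵀ * Pm *
        Matrix.fromRows (1 : Matrix (Fin n) (Fin n) ℝ) (Y - θᵀ * Φ)ᵀ).PosSemidef) ↔
    (((Matrix.fromRows (1 : Matrix (Fin n) (Fin n) ℝ) θ)ᵀ *
        (Matrix.fromBlocks (1 : Matrix (Fin n) (Fin n) ℝ) Y 0 (-Φ) * Pm *
          (Matrix.fromBlocks (1 : Matrix (Fin n) (Fin n) ℝ) Y 0 (-Φ))ᵀ) *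
        Matrix.fromRows (1 : Matrix (Fin n) (Fin n) ℝ) θ).PosSemidef) :=
  stmt_7_general n T k Y Φ Pm θ
end

section
/- Boundedness of 𝒵(Π) under negative definite Π₂₂: let Π be symmetric with Π₂₂ ≺ 0 and Π|Π₂₂ ⪰ 0. Then for every Z ∈ 𝒵(Π) and unit vector v ∈ ℝ^n, ‖(Z - Z*)v‖²_{(-Π₂₂)} := vᵀ(Z-Z*)ᵀ(-Π₂₂)(Z-Z*)v ≤ vᵀ(Π|Π₂₂)v ≤ λ_max(Π|Π₂₂), where Z* = -Π₂₂⁻¹Π₂₁. That is, the QMI set 𝒵(Π) is a bounded 'matrix ellipsoid' centered at Z*. -/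
/-! Completing the square in `Z` rewrites `[I; Z]ᵀ Π [I; Z]` as `Π|Π₂₂ - (Z - Z*)ᵀ (-Π₂₂) (Z - Z*)`,
so positive semidefiniteness of the former is the first inequality. The second is the Rayleigh
bound: by the spectral theorem `λ_max • 1 - Π|Π₂₂` is unitarily conjugate to a nonnegative
diagonal matrix. -/

open Matrix

namespace Matrix

variable {R : Type*} [CommRing R] {m t : Type*} [Fintype t]

theorem transpose_fromRows_mul_fromBlocks_mul_fromRows [Fintype m] (X : Matrix m m R)
    (Z : Matrix t m R) (A : Matrix m m R) (B : Matrix m t R) (C : Matrix t m R)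
    (D : Matrix t t R) :
    (fromRows X Z)ᵀ * fromBlocks A B C D * fromRows X Z =
      Xᵀ * A * X + Xᵀ * B * Z + Zᵀ * C * X + Zᵀ * D * Z := by
  rw [transpose_fromRows, fromCols_mul_fromBlocks, fromCols_mul_fromRows]
  simp only [Matrix.add_mul, Matrix.mul_assoc]
  abel

theorem quadratic_eq_schur_sub_sq [DecidableEq t] (A : Matrix m m R)
    (B : Matrix m t R) (D : Matrix t t R) (hD : Dᵀ = D) (hdet : IsUnit D.det) (Z : Matrix t m R) :
    A + B * Z + Zᵀ * Bᵀ + Zᵀ * D * Z =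
      (A - B * D⁻¹ * Bᵀ) - (Z + D⁻¹ * Bᵀ)ᵀ * (-D) * (Z + D⁻¹ * Bᵀ) := by
  rw [transpose_add, transpose_mul, transpose_nonsing_inv, hD, transpose_transpose]
  simp only [Matrix.add_mul, Matrix.mul_add, Matrix.mul_neg, Matrix.neg_mul, ← Matrix.mul_assoc,
    Matrix.mul_assoc _ D⁻¹ D, nonsing_inv_mul D hdet, mul_nonsing_inv_cancel_right D _ hdet,
    Matrix.mul_one]
  abel

open scoped ComplexOrder in
theorem IsHermitian.star_dotProduct_mulVec_le_iSup_eigenvalues {𝕜 n : Type*} [RCLike 𝕜]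
    [Fintype n] [DecidableEq n] {A : Matrix n n 𝕜} (hA : A.IsHermitian) (v : n → 𝕜) :
    star v ⬝ᵥ (A *ᵥ v) ≤ ((⨆ i, hA.eigenvalues i : ℝ) : 𝕜) * (star v ⬝ᵥ v) := by
  set c := ⨆ i, hA.eigenvalues i
  set U : Matrix n n 𝕜 := ↑hA.eigenvectorUnitary
  have hgap : (diagonal fun i => ((c - hA.eigenvalues i : ℝ) : 𝕜)).PosSemidef :=
    posSemidef_diagonal_iff.2 fun i => RCLike.ofReal_nonneg.2 <|
      sub_nonneg.2 <| le_ciSup (Set.finite_range _).bddAbove i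
  have hconj :
      (c : 𝕜) • 1 - A = U * diagonal (fun i => ((c - hA.eigenvalues i : ℝ) : 𝕜)) * star U := by
    have hUU : U * star U = 1 := Unitary.mul_star_self_of_mem hA.eigenvectorUnitary.2
    conv_lhs => rw [hA.spectral_theorem, Unitary.conjStarAlgAut_apply]
    have hdiag : (diagonal fun i => ((c - hA.eigenvalues i : ℝ) : 𝕜)) =
        (c : 𝕜) • 1 - diagonal (RCLike.ofReal ∘ hA.eigenvalues) := by
      rw [smul_one_eq_diagonal, diagonal_sub]
      simp
    rw [hdiag, Matrix.mul_sub, Matrix.sub_mul, Matrix.mul_smul, Matrix.mul_one, Matrix.smul_mul, hUU]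
  have hnonneg := (hconj ▸ hgap.mul_mul_conjTranspose_same U).dotProduct_mulVec_nonneg v
  rwa [sub_mulVec, smul_mulVec, one_mulVec, dotProduct_sub, dotProduct_smul, smul_eq_mul,
    sub_nonneg] at hnonneg

end Matrix

theorem stmt_19_general (n T : ℕ)
    (P11 : Matrix (Fin n) (Fin n) ℝ) (P12 : Matrix (Fin n) (Fin T) ℝ)
    (P22 : Matrix (Fin T) (Fin T) ℝ)
    (h22 : (-P22).PosDef) :
    ∀ Z : Matrix (Fin T) (Fin n) ℝ,
      ((Matrix.fromRows (1 : Matrix (Fin n) (Fin n) ℝ) Z)ᵀ *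
          Matrix.fromBlocks P11 P12 P12ᵀ P22 *
          Matrix.fromRows (1 : Matrix (Fin n) (Fin n) ℝ) Z).PosSemidef →
      ∀ v : Fin n → ℝ, Real.sqrt (v ⬝ᵥ v) = 1 →
        ∀ (hS : (P11 - P12 * P22⁻¹ * P12ᵀ).IsHermitian),
          v ⬝ᵥ (((Z - (-(P22⁻¹ * P12ᵀ)))ᵀ * (-P22) * (Z - (-(P22⁻¹ * P12ᵀ)))) *ᵥ v) ≤
              v ⬝ᵥ ((P11 - P12 * P22⁻¹ * P12ᵀ) *ᵥ v) ∧
            v ⬝ᵥ ((P11 - P12 * P22⁻¹ * P12ᵀ) *ᵥ v) ≤ ⨆ i, hS.eigenvalues i := by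
  intro Z hZ v hv hS
  have hP22 : P22ᵀ = P22 := by
    simpa [conjTranspose_eq_transpose_of_trivial] using h22.isHermitian.eq
  have hdet : IsUnit P22.det := (isUnit_iff_isUnit_det _).1 ((IsUnit.neg_iff _).1 h22.isUnit)
  have hvv : v ⬝ᵥ v = 1 := (Real.sqrt_eq_one).1 hv
  simp only [transpose_fromRows_mul_fromBlocks_mul_fromRows, transpose_one, Matrix.one_mul,
    Matrix.mul_one, quadratic_eq_schur_sub_sq _ _ _ hP22 hdet] at hZ
  rw [sub_neg_eq_add]
  constructor
  · have hnonneg := hZ.dotProduct_mulVec_nonneg v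
    rwa [sub_mulVec, dotProduct_sub, sub_nonneg] at hnonneg
  · simpa [hvv] using hS.star_dotProduct_mulVec_le_iSup_eigenvalues v

/-- Boundedness of `𝒵(Π)` under `Π₂₂ ≺ 0`: for every `Z ∈ 𝒵(Π)` and unit vector
`v`, `vᵀ(Z-Z*)ᵀ(-Π₂₂)(Z-Z*)v ≤ vᵀ(Π|Π₂₂)v ≤ λ_max(Π|Π₂₂)`, where
`Z* = -Π₂₂⁻¹Π₂₁`. -/
theorem stmt_19 (n T : ℕ)
    (P11 : Matrix (Fin n) (Fin n) ℝ) (P12 : Matrix (Fin n) (Fin T) ℝ)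
    (P22 : Matrix (Fin T) (Fin T) ℝ)
    (hsym : (Matrix.fromBlocks P11 P12 P12ᵀ P22).IsHermitian)
    (h22 : (-P22).PosDef)
    (hschur : (P11 - P12 * P22⁻¹ * P12ᵀ).PosSemidef) :
    ∀ Z : Matrix (Fin T) (Fin n) ℝ,
      ((Matrix.fromRows (1 : Matrix (Fin n) (Fin n) ℝ) Z)ᵀ *
          Matrix.fromBlocks P11 P12 P12ᵀ P22 *
          Matrix.fromRows (1 : Matrix (Fin n) (Fin n) ℝ) Z).PosSemidef →
      ∀ v : Fin n → ℝ, Real.sqrt (v ⬝ᵥ v) = 1 →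
        ∀ (hS : (P11 - P12 * P22⁻¹ * P12ᵀ).IsHermitian),
          v ⬝ᵥ (((Z - (-(P22⁻¹ * P12ᵀ)))ᵀ * (-P22) * (Z - (-(P22⁻¹ * P12ᵀ)))) *ᵥ v) ≤
              v ⬝ᵥ ((P11 - P12 * P22⁻¹ * P12ᵀ) *ᵥ v) ∧
            v ⬝ᵥ ((P11 - P12 * P22⁻¹ * P12ᵀ) *ᵥ v) ≤ ⨆ i, hS.eigenvalues i :=
  stmt_19_general n T P11 P12 P22 h22
end
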